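/- arXiv:math/9909052 — 2 statements merged into one kernel-verified Lean document; each statement's English description precedes it below -/
import Mathlib

section
/- Let B be a finite set of odd cardinality n ≥ 5 with A = Alt(B) acting on Q_B. If T is a nonempty even-cardinality subset of B of cardinality at least 4, then there exists an even permutation s ∈ A such that the symmetric difference T △ s(T) is nonempty and has cardinality strictly less than that of T. -/
/-- Let `B` have odd cardinality `n ≥ 5`. If `T ⊆ B` is a subset of even
cardinality at least `4`, then there is an even permutation `s` of `B` such
that the symmetric difference `T △ s(T)` is nonempty of cardinality strictly
smaller than that of `T`. -/
theorem exists_even_perm_shrink (B : Type*) [Fintype B] [DecidableEq B]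
    (hodd : Odd (Fintype.card B)) (h5 : 5 ≤ Fintype.card B)
    (T : Finset B) (hTeven : Even T.card) (hT4 : 4 ≤ T.card) :
    ∃ s ∈ alternatingGroup B,
      (symmDiff T (T.image s)).Nonempty ∧ (symmDiff T (T.image s)).card < T.card := by
  -- find two distinct elements a b of T
  obtain ⟨a, haT, b, hbT, hab⟩ := Finset.one_lt_card.mp (by omega : 1 < T.card)
  -- find c not in T
  have hTne : T ≠ Finset.univ := by
    intro h
    have : T.card = Fintype.card B := by rw [h, Finset.card_univ]
    rcases hTeven with ⟨k, hk⟩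
    rcases hodd with ⟨m, hm⟩
    omega
  obtain ⟨c, hcT⟩ : ∃ c, c ∉ T := by
    by_contra h
    push_neg at h
    exact hTne (Finset.eq_univ_of_forall h)
  have hac : a ≠ c := fun h => hcT (h ▸ haT)
  have hbc : b ≠ c := fun h => hcT (h ▸ hbT)
  set s : Equiv.Perm B := Equiv.swap a b * Equiv.swap b c with hs
  have hsmem : s ∈ alternatingGroup B := by
    rw [Equiv.Perm.mem_alternatingGroup, hs, map_mul,
      Equiv.Perm.sign_swap hab, Equiv.Perm.sign_swap hbc]
    decide
  have hinv : ∀ x, s⁻¹ x = Equiv.swap b c (Equiv.swap a b x) := by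
    intro x; rw [hs, mul_inv_rev, Equiv.Perm.mul_apply,
      Equiv.swap_inv, Equiv.swap_inv]
  have hmem : ∀ x, x ∈ T.image s ↔ s⁻¹ x ∈ T := by
    intro x
    constructor
    · rintro hx
      obtain ⟨y, hy, rfl⟩ := Finset.mem_image.mp hx
      simpa using hy
    · intro hx
      exact Finset.mem_image.mpr ⟨s⁻¹ x, hx, by simp⟩
  have hkey : symmDiff T (T.image s) = {a, c} := by
    ext x
    rw [Finset.mem_symmDiff, hmem x, hinv x]
    by_cases hxa : x = a
    · subst hxa
      rw [Equiv.swap_apply_left, Equiv.swap_apply_left]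
      simp [haT, hcT]
    · by_cases hxb : x = b
      · subst hxb
        rw [Equiv.swap_apply_right, Equiv.swap_apply_of_ne_of_ne hab hac]
        simp [hbT, haT, hxa, hbc]
      · by_cases hxc : x = c
        · subst hxc
          rw [Equiv.swap_apply_of_ne_of_ne (Ne.symm hac) (Ne.symm hbc),
            Equiv.swap_apply_right]
          simp [hcT, hbT]
        · rw [Equiv.swap_apply_of_ne_of_ne hxa hxb,
            Equiv.swap_apply_of_ne_of_ne hxb hxc]
          simp [hxa, hxc]
  refine ⟨s, hsmem, ?_, ?_⟩
  · rw [hkey]; exact ⟨a, by simp⟩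
  · rw [hkey]
    have : ({a, c} : Finset B).card ≤ 2 := Finset.card_insert_le _ _ |>.trans (by simp)
    omega
end

section
/- Let V be a finite-dimensional vector space over a field, G a group acting linearly on V with V a simple G-module, and R a subalgebra of End(V) containing the identity such that gRg⁻¹ = R for all g ∈ G. Then V is a semisimple R-module. -/
set_option maxHeartbeats 1000000
set_option synthInstance.maxHeartbeats 100000

section Aux

variable {F : Type*} [Field F] {V : Type*} [AddCommGroup V] [Module F V]
  {G : Type*} [Group G]

lemma rho_rho_inv (ρ : G →* (Module.End F V)ˣ) (g : G) (v : V) :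
    (ρ g : Module.End F V) (((ρ g⁻¹ : (Module.End F V)ˣ) : Module.End F V) v) = v := by
  have h : (ρ g) * (ρ g⁻¹) = 1 := by rw [← map_mul, mul_inv_cancel, map_one]
  calc (ρ g : Module.End F V) (((ρ g⁻¹ : (Module.End F V)ˣ) : Module.End F V) v)
      = ((ρ g * ρ g⁻¹ : (Module.End F V)ˣ) : Module.End F V) v := rfl
    _ = v := by rw [h]; rfl

lemma rho_inv_rho (ρ : G →* (Module.End F V)ˣ) (g : G) (v : V) :
    ((ρ g⁻¹ : (Module.End F V)ˣ) : Module.End F V) ((ρ g : Module.End F V) v) = v := by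
  have := rho_rho_inv ρ g⁻¹ v
  rwa [inv_inv] at this

/-- The image of an `R`-submodule under `ρ g` is again an `R`-submodule. -/
def conjSub (ρ : G →* (Module.End F V)ˣ) (R : Subalgebra F (Module.End F V))
    (hconj : ∀ g : G, ∀ r ∈ R,
      (ρ g : Module.End F V) * r * ((ρ g)⁻¹ : (Module.End F V)ˣ) ∈ R)
    (g : G) (p : Submodule ↥R V) : Submodule ↥R V where
  carrier := (ρ g : Module.End F V) '' p
  add_mem' := by
    rintro a b ⟨x, hx, rfl⟩ ⟨y, hy, rfl⟩
    exact ⟨x + y, p.add_mem hx hy, map_add _ _ _⟩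
  zero_mem' := ⟨0, p.zero_mem, map_zero _⟩
  smul_mem' := by
    rintro r a ⟨x, hx, rfl⟩
    have hmem : ((ρ g⁻¹ : (Module.End F V)ˣ) : Module.End F V) * (r : Module.End F V)
        * (((ρ g⁻¹)⁻¹ : (Module.End F V)ˣ) : Module.End F V) ∈ R := hconj g⁻¹ r r.2
    refine ⟨(⟨_, hmem⟩ : ↥R) • x, p.smul_mem _ hx, ?_⟩
    show (ρ g : Module.End F V)
      ((((ρ g⁻¹ : (Module.End F V)ˣ) : Module.End F V) * (r : Module.End F V)
        * (((ρ g⁻¹)⁻¹ : (Module.End F V)ˣ) : Module.End F V)) x)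
      = (r : Module.End F V) ((ρ g : Module.End F V) x)
    have h1 : ((ρ g⁻¹)⁻¹ : (Module.End F V)ˣ) = ρ g := by rw [← map_inv, inv_inv]
    simp only [h1, Module.End.mul_apply]
    rw [rho_rho_inv]

lemma mem_conjSub (ρ : G →* (Module.End F V)ˣ) (R : Subalgebra F (Module.End F V))
    (hconj : ∀ g : G, ∀ r ∈ R,
      (ρ g : Module.End F V) * r * ((ρ g)⁻¹ : (Module.End F V)ˣ) ∈ R)
    {g : G} {p : Submodule ↥R V} {x : V} :
    x ∈ conjSub ρ R hconj g p ↔ ∃ y ∈ p, (ρ g : Module.End F V) y = x := Iff.rfl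

lemma conjSub_conjSub (ρ : G →* (Module.End F V)ˣ) (R : Subalgebra F (Module.End F V))
    (hconj : ∀ g : G, ∀ r ∈ R,
      (ρ g : Module.End F V) * r * ((ρ g)⁻¹ : (Module.End F V)ˣ) ∈ R)
    (g : G) (p : Submodule ↥R V) :
    conjSub ρ R hconj g⁻¹ (conjSub ρ R hconj g p) = p := by
  ext x
  simp only [mem_conjSub]
  constructor
  · rintro ⟨y, ⟨z, hz, rfl⟩, rfl⟩
    rwa [rho_inv_rho]
  · intro hx
    exact ⟨(ρ g : Module.End F V) x, ⟨x, hx, rfl⟩, rho_inv_rho ρ g x⟩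

lemma conjSub_mono (ρ : G →* (Module.End F V)ˣ) (R : Subalgebra F (Module.End F V))
    (hconj : ∀ g : G, ∀ r ∈ R,
      (ρ g : Module.End F V) * r * ((ρ g)⁻¹ : (Module.End F V)ˣ) ∈ R)
    (g : G) : Monotone (conjSub ρ R hconj g) := by
  rintro p q hpq x ⟨y, hy, rfl⟩
  exact ⟨y, hpq hy, rfl⟩

/-- Conjugation by `ρ g` as an order isomorphism of `R`-submodules. -/
def conjIso (ρ : G →* (Module.End F V)ˣ) (R : Subalgebra F (Module.End F V))
    (hconj : ∀ g : G, ∀ r ∈ R,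
      (ρ g : Module.End F V) * r * ((ρ g)⁻¹ : (Module.End F V)ˣ) ∈ R)
    (g : G) : Submodule ↥R V ≃o Submodule ↥R V where
  toFun := conjSub ρ R hconj g
  invFun := conjSub ρ R hconj g⁻¹
  left_inv p := conjSub_conjSub ρ R hconj g p
  right_inv p := by
    have := conjSub_conjSub ρ R hconj g⁻¹ p
    rwa [inv_inv] at this
  map_rel_iff' := by
    intro p q
    show conjSub ρ R hconj g p ≤ conjSub ρ R hconj g q ↔ p ≤ q
    constructor
    · intro h
      have := conjSub_mono ρ R hconj g⁻¹ h
      rwa [conjSub_conjSub, conjSub_conjSub] at this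
    · exact fun h => conjSub_mono ρ R hconj g h

lemma orderIso_isAtom {α β : Type*} [CompleteLattice α] [CompleteLattice β]
    (e : α ≃o β) {a : α} (ha : IsAtom a) : IsAtom (e a) := by
  constructor
  · intro h
    exact ha.1 (e.injective (by rw [h, map_bot]))
  · intro b hb
    have h1 : e.symm b < a := by
      have := e.symm.strictMono hb
      rwa [e.symm_apply_apply] at this
    have h2 := ha.2 _ h1
    rw [← map_bot e.symm] at h2
    exact e.symm.injective h2

end Aux

/-- Let `V` be a finite-dimensional vector space over a field `F`, `G` a group
acting linearly on `V` through `ρ` with `V` a simple `G`-module, and `R` a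
unital subalgebra of `End_F(V)` with `ρ(g) R ρ(g)⁻¹ = R` for all `g`. Then `V`
is a semisimple `R`-module: every `R`-stable subspace admits an `R`-stable
complement. -/
theorem semisimple_of_conj_stable (F : Type*) [Field F] (V : Type*)
    [AddCommGroup V] [Module F V] [FiniteDimensional F V]
    (G : Type*) [Group G] (ρ : G →* (Module.End F V)ˣ)
    (hsimple : ∀ U : Submodule F V,
      (∀ g : G, U.map (ρ g : Module.End F V) ≤ U) → U = ⊥ ∨ U = ⊤)
    (hnontriv : (⊥ : Submodule F V) ≠ ⊤)
    (R : Subalgebra F (Module.End F V))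
    (hconj : ∀ g : G, ∀ r ∈ R,
      (ρ g : Module.End F V) * r * ((ρ g)⁻¹ : (Module.End F V)ˣ) ∈ R) :
    ∀ U : Submodule F V, (∀ r ∈ R, U.map r ≤ U) →
      ∃ W : Submodule F V, (∀ r ∈ R, W.map r ≤ W) ∧ IsCompl U W := by
  intro U hU
  haveI : IsArtinian ↥R V := isArtinian_of_tower F inferInstance
  haveI : IsAtomic (Submodule ↥R V) :=
    isAtomic_of_orderBot_wellFounded_lt (IsWellFounded.wf)
  set T : Submodule ↥R V := sSup {a | IsAtom a} with hT
  -- T is stable under every ρ g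
  have hTg : ∀ g : G, (T.restrictScalars F).map (ρ g : Module.End F V) ≤ T.restrictScalars F := by
    intro g
    have h1 : conjSub ρ R hconj g T ≤ T := by
      set e := conjIso ρ R hconj g with he
      have hle : T ≤ e.symm T := by
        conv_lhs => rw [hT]
        apply sSup_le
        intro a ha
        have h4 : e a ≤ T := le_sSup (orderIso_isAtom e ha)
        have h5 := e.symm.monotone h4
        rwa [e.symm_apply_apply] at h5
      calc conjSub ρ R hconj g T = e T := rfl
        _ ≤ e (e.symm T) := e.monotone hle
        _ = T := e.apply_symm_apply T
    rintro x ⟨y, hy, rfl⟩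
    exact h1 ⟨y, hy, rfl⟩
  have hTbot_or : T.restrictScalars F = ⊥ ∨ T.restrictScalars F = ⊤ := hsimple _ hTg
  have hTtop : T = ⊤ := by
    rcases hTbot_or with h | h
    · exfalso
      have hT0 : T = ⊥ := by
        apply Submodule.restrictScalars_injective F
        rw [h, Submodule.restrictScalars_bot]
      rcases IsAtomic.eq_bot_or_exists_atom_le (⊤ : Submodule ↥R V) with h2 | ⟨a, ha, _⟩
      · apply hnontriv
        ext x
        simp only [Submodule.mem_bot, Submodule.mem_top, iff_true]
        have hx : x ∈ (⊤ : Submodule ↥R V) := trivial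
        rw [h2] at hx
        exact hx
      · exact ha.1 (le_bot_iff.mp (hT0 ▸ le_sSup ha))
    · apply Submodule.restrictScalars_injective F
      rw [h, Submodule.restrictScalars_top]
  haveI : IsSemisimpleModule ↥R V := by
    apply IsSemisimpleModule.of_sSup_simples_eq_top
    have h3 : {m : Submodule ↥R V | IsSimpleModule ↥R m} = {a | IsAtom a} := by
      ext m; exact isSimpleModule_iff_isAtom
    rw [h3, ← hT, hTtop]
  -- transfer the complement
  let U' : Submodule ↥R V :=
    { carrier := U
      add_mem' := fun ha hb => U.add_mem ha hb
      zero_mem' := U.zero_mem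
      smul_mem' := fun r x hx => hU r r.2 ⟨x, hx, rfl⟩ }
  obtain ⟨W', hW'⟩ := exists_isCompl U'
  have hUU' : U = U'.restrictScalars F := by ext x; exact Iff.rfl
  refine ⟨W'.restrictScalars F, ?_, ?_⟩
  · rintro r hr x ⟨y, hy, rfl⟩
    show r y ∈ W'
    exact W'.smul_mem (⟨r, hr⟩ : ↥R) hy
  · rw [hUU']
    have hinf : U' ⊓ W' = ⊥ := disjoint_iff.mp hW'.1
    have hsup : U' ⊔ W' = ⊤ := codisjoint_iff.mp hW'.2
    constructor
    · rw [disjoint_iff]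
      ext x
      simp only [Submodule.mem_inf, Submodule.restrictScalars_mem, Submodule.mem_bot]
      constructor
      · rintro ⟨h1, h2⟩
        have hx : x ∈ U' ⊓ W' := ⟨h1, h2⟩
        rw [hinf] at hx
        simpa using hx
      · rintro rfl; exact ⟨U'.zero_mem, W'.zero_mem⟩
    · rw [codisjoint_iff]
      ext x
      simp only [Submodule.mem_top, iff_true]
      have hx : x ∈ U' ⊔ W' := by rw [hsup]; trivial
      obtain ⟨y, hy, z, hz, rfl⟩ := Submodule.mem_sup.mp hx
      exact Submodule.add_mem_sup
        (show y ∈ U'.restrictScalars F from hy)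
        (show z ∈ W'.restrictScalars F from hz)
end
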